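/- arXiv:2304.03985 — 5 statements merged into one kernel-verified Lean document; each statement's English description precedes it below -/
import Mathlib

section
/- For any two full binary trees T1 and T2 with n ≥ 1 internal nodes each, the rotation distance satisfies d(T1, T2) ≤ 2n − 2. -/
/-- Full binary trees: every node is a leaf or has exactly two children.
`node l r` is an internal node with left subtree `l` and right subtree `r`. -/
inductive FBT : Type
  | leaf : FBT
  | node : FBT → FBT → FBT
  deriving DecidableEq

namespace FBT

/-- Number of internal nodes. -/
def internal : FBT → ℕ
  | leaf => 0
  | node l r => internal l + internal r + 1

/-- Height: maximum number of internal nodes on a root-to-leaf path. -/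
def height : FBT → ℕ
  | leaf => 0
  | node l r => max (height l) (height r) + 1

/-- Rank of a full binary tree (Ehrenfeucht–Haussler rank). -/
def rank : FBT → ℕ
  | leaf => 0
  | node l r => if rank l = rank r then rank l + 1 else max (rank l) (rank r)

/-- A full binary tree is skew if every internal node has at least one leaf child. -/
def skew : FBT → Prop
  | leaf => True
  | node l r => (l = leaf ∨ r = leaf) ∧ skew l ∧ skew r

/-- Pre-order traversal of the internal nodes, labeled by the in-order labeling
(1-indexed); `off` is the number of in-order labels used strictly to the left
of this subtree.  `T.preorderAux 0` is the tree permutation of `T`, as a list. -/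
def preorderAux : FBT → ℕ → List ℕ
  | leaf, _ => []
  | node l r, off =>
      (off + internal l + 1) :: (preorderAux l off ++ preorderAux r (off + internal l + 1))

/-- Number of internal nodes on the rightmost root-to-leaf path. -/
def rightPath : FBT → ℕ
  | leaf => 0
  | node _ r => rightPath r + 1

end FBT

/-- One (left or right) rotation, performed at some node of the tree. -/
inductive Rot : FBT → FBT → Prop
  | rotR (C D E : FBT) : Rot (FBT.node (FBT.node C D) E) (FBT.node C (FBT.node D E))
  | rotL (C D E : FBT) : Rot (FBT.node C (FBT.node D E)) (FBT.node (FBT.node C D) E)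
  | congrL {l l' : FBT} (r : FBT) : Rot l l' → Rot (FBT.node l r) (FBT.node l' r)
  | congrR {r r' : FBT} (l : FBT) : Rot r r' → Rot (FBT.node l r) (FBT.node l r')

/-- `RotChainP P k T1 T2`: there is a sequence of `k` rotations transforming `T1`
into `T2` in which every tree reached along the way satisfies `P`. -/
def RotChainP (P : FBT → Prop) : ℕ → FBT → FBT → Prop
  | 0, T1, T2 => T1 = T2
  | k+1, T1, T2 => ∃ T, Rot T1 T ∧ P T ∧ RotChainP P k T T2

/-- `RotChain k T1 T2`: `T1` can be transformed into `T2` by `k` rotations. -/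
def RotChain : ℕ → FBT → FBT → Prop := RotChainP fun _ => True

/-- The rotation distance between two full binary trees. -/
noncomputable def rotDist (T1 T2 : FBT) : ℕ := sInf {k | RotChain k T1 T2}

/-- The right comb on `n` internal nodes. -/
def rightComb : ℕ → FBT
  | 0 => FBT.leaf
  | n+1 => FBT.node FBT.leaf (rightComb n)

/-- The left comb on `n` internal nodes. -/
def leftComb : ℕ → FBT
  | 0 => FBT.leaf
  | n+1 => FBT.node (leftComb n) FBT.leaf

/-- The complete binary tree of height `r`. -/
def completeTree : ℕ → FBT
  | 0 => FBT.leaf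
  | r+1 => FBT.node (completeTree r) (completeTree r)

/-- Replace the leftmost leaf of the first tree by the second tree. -/
def attachLeftmost : FBT → FBT → FBT
  | FBT.leaf, S => S
  | FBT.node l r, S => FBT.node (attachLeftmost l S) r

/-- The transposition `δ_{i,j,k}` (1-indexed, `1 ≤ i < j < k`) applied to a list:
the consecutive blocks occupying positions `i..j-1` and `j..k-1` are swapped,
all other positions are left fixed. -/
def transposeList (i j k : ℕ) (l : List ℕ) : List ℕ :=
  l.take (i-1) ++ (l.drop (j-1)).take (k-j) ++ (l.drop (i-1)).take (j-i) ++ l.drop (k-1)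

/-- `δ_{i,j,k}` is a tree transposition (on permutations of `n` elements): there are
full binary trees `T1, T2` with `n` internal nodes each, at rotation distance `1`,
whose tree permutations `σ, τ` satisfy `δ_{i,j,k}(σ) = τ`. -/
def IsTreeTransposition (n i j k : ℕ) : Prop :=
  ∃ T1 T2 : FBT, T1.internal = n ∧ T2.internal = n ∧ rotDist T1 T2 = 1 ∧
    transposeList i j k (T1.preorderAux 0) = T2.preorderAux 0

/-- `σ` (a permutation of `Fin n`) is a tree permutation: the pre-order traversal of
some full binary tree with `n` internal nodes under the in-order labeling.
(Positions and values are converted to 1-indexed labels.) -/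
def IsTreePerm (n : ℕ) (σ : Equiv.Perm (Fin n)) : Prop :=
  ∃ T : FBT, T.internal = n ∧ T.preorderAux 0 = List.ofFn fun i => (σ i : ℕ) + 1

/-- `σ` is a skew permutation: the tree permutation of some full skew tree. -/
def IsSkewPerm (n : ℕ) (σ : Equiv.Perm (Fin n)) : Prop :=
  ∃ T : FBT, T.internal = n ∧ T.skew ∧ T.preorderAux 0 = List.ofFn fun i => (σ i : ℕ) + 1

/-- `SkewSim σ τ` (written `σ ∼ τ` in the paper): `τ` is obtained from `σ` (lists,
0-indexed) by a skew transposition: for some position `i`, `σ(i)` and `σ(i+1)` are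
respectively the min and the max (or the max and the min) of the suffix starting at
position `i`, and `τ` is `σ` with the entries at positions `i` and `i+1` swapped. -/
def SkewSim (σ τ : List ℕ) : Prop :=
  ∃ i : ℕ, i + 1 < σ.length ∧
    (((∀ x ∈ σ.drop i, σ.getD i 0 ≤ x) ∧ (∀ x ∈ σ.drop i, x ≤ σ.getD (i+1) 0)) ∨
     ((∀ x ∈ σ.drop i, x ≤ σ.getD i 0) ∧ (∀ x ∈ σ.drop i, σ.getD (i+1) 0 ≤ x))) ∧
    τ = σ.take i ++ [σ.getD (i+1) 0, σ.getD i 0] ++ σ.drop (i+2)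

/-- The tree polynomial of a full binary tree: the sum over all leaves of `x^a y^b`,
where `a` (resp. `b`) is the number of left (resp. right) edges on the root-to-leaf
path.  `X 0` plays the role of `x` and `X 1` the role of `y`. -/
noncomputable def treePoly : FBT → MvPolynomial (Fin 2) ℕ
  | FBT.leaf => 1
  | FBT.node l r => MvPolynomial.X 0 * treePoly l + MvPolynomial.X 1 * treePoly r

/-! Every tree can be rotated into the right comb by right rotations along its right spine:
each rotation lengthens the right spine by one, so a tree with `n` internal nodes whose right
spine has `p ≥ 1` nodes reaches the comb in `n - p ≤ n - 1` steps. Going from `T₁` to the comb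
and back from the comb to `T₂` takes at most `2n - 2` rotations. -/

namespace FBT

theorem rightPath_le_internal : ∀ T : FBT, T.rightPath ≤ T.internal
  | leaf => le_rfl
  | node _ r => by
    have := rightPath_le_internal r
    simp only [rightPath, internal]
    omega

theorem one_le_rightPath {T : FBT} (h : 1 ≤ T.internal) : 1 ≤ T.rightPath := by
  cases T with
  | leaf => simp [internal] at h
  | node => simp [rightPath]

theorem eq_rightComb_of_rightPath_eq : ∀ T : FBT, T.rightPath = T.internal →
    T = rightComb T.internal
  | leaf, _ => rfl
  | node l r, h => by
    have hl := rightPath_le_internal l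
    have hr := rightPath_le_internal r
    simp only [rightPath, internal] at h
    cases l with
    | node => simp only [internal] at h; omega
    | leaf =>
      simp only [internal, Nat.zero_add, rightComb]
      rw [← eq_rightComb_of_rightPath_eq r (by simp only [internal] at h; omega)]

theorem exists_rot_rightPath_succ : ∀ T : FBT, T.rightPath < T.internal →
    ∃ T', Rot T T' ∧ T'.rightPath = T.rightPath + 1
  | leaf, h => by simp [rightPath, internal] at h
  | node l r, h => by
    by_cases hr : r.rightPath < r.internal
    · obtain ⟨r', hrot, hrp⟩ := exists_rot_rightPath_succ r hr
      exact ⟨node l r', Rot.congrR l hrot, by simp [rightPath, hrp]⟩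
    · cases l with
      | leaf => simp only [rightPath, internal] at h; omega
      | node C D => exact ⟨node C (node D r), Rot.rotR C D r, by simp [rightPath]⟩

end FBT

namespace Rot

theorem internal_eq {T T' : FBT} (h : Rot T T') : T'.internal = T.internal := by
  induction h with
  | rotR | rotL => simp only [FBT.internal]; omega
  | congrL _ _ ih | congrR _ _ ih => simp [FBT.internal, ih]

theorem symm {T T' : FBT} (h : Rot T T') : Rot T' T := by
  induction h with
  | rotR C D E => exact rotL C D E
  | rotL C D E => exact rotR C D E
  | congrL r _ ih => exact congrL r ih
  | congrR l _ ih => exact congrR l ih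

end Rot

theorem RotChainP.trans {P : FBT → Prop} :
    ∀ {k₁ k₂ : ℕ} {T₁ T₂ T₃ : FBT},
      RotChainP P k₁ T₁ T₂ → RotChainP P k₂ T₂ T₃ → RotChainP P (k₁ + k₂) T₁ T₃
  | 0, _, _, _, _, h₁, h₂ => by rw [Nat.zero_add, show _ = _ from h₁]; exact h₂
  | k + 1, k₂, _, _, _, ⟨T, hrot, hP, h₁⟩, h₂ => by
    rw [Nat.add_right_comm]
    exact ⟨T, hrot, hP, trans h₁ h₂⟩

theorem RotChain.trans {k₁ k₂ : ℕ} {T₁ T₂ T₃ : FBT}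
    (h₁ : RotChain k₁ T₁ T₂) (h₂ : RotChain k₂ T₂ T₃) : RotChain (k₁ + k₂) T₁ T₃ :=
  RotChainP.trans h₁ h₂

theorem RotChain.symm : ∀ {k : ℕ} {T₁ T₂ : FBT}, RotChain k T₁ T₂ → RotChain k T₂ T₁
  | 0, _, _, h => (show _ = _ from h).symm
  | _ + 1, T₁, _, ⟨T, hrot, _, h⟩ =>
    RotChain.trans (RotChain.symm h) (show RotChain 1 T T₁ from ⟨T₁, hrot.symm, trivial, rfl⟩)

theorem rotChain_rightComb : ∀ (d : ℕ) (T : FBT), T.internal - T.rightPath = d →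
    RotChain d T (rightComb T.internal)
  | 0, T, h => by
    have := T.rightPath_le_internal
    rw [← T.eq_rightComb_of_rightPath_eq (by omega)]
    rfl
  | d + 1, T, h => by
    obtain ⟨T', hrot, hrp⟩ := T.exists_rot_rightPath_succ (by omega)
    have hint := hrot.internal_eq
    refine ⟨T', hrot, trivial, hint ▸ rotChain_rightComb d T' ?_⟩
    omega

/-- For any two full binary trees `T1`, `T2` with `n ≥ 1` internal nodes
each, the rotation distance satisfies `d(T1,T2) ≤ 2n - 2`. -/
theorem rotation_distance_le_two_n_sub_two (n : ℕ) (hn : 1 ≤ n) (T1 T2 : FBT)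
    (h1 : T1.internal = n) (h2 : T2.internal = n) :
    ∃ k ≤ 2 * n - 2, RotChain k T1 T2 := by
  have c1 := rotChain_rightComb _ T1 rfl
  have c2 := rotChain_rightComb _ T2 rfl
  rw [h1] at c1
  rw [h2] at c2
  refine ⟨_, ?_, c1.trans c2.symm⟩
  have p1 := FBT.one_le_rightPath (h1 ▸ hn)
  have p2 := FBT.one_le_rightPath (h2 ▸ hn)
  omega
end

section
/- A permutation σ ∈ S_n is a tree permutation if and only if there do not exist indices i < j < k such that σ(k) < σ(i) < σ(j). -/
/-! In the pre-order word of a tree the root comes first, then the labels of the left subtree,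
all smaller than the root, then those of the right subtree, all larger; by induction such a word
avoids the pattern 231. Conversely, if an arrangement of an interval avoids 231 and starts with `a`,
then no entry above `a` precedes an entry below `a`, so the rest of the word is the entries
below `a` followed by the entries above `a`, and both parts are again 231-avoiding arrangements
of intervals: they are the pre-order words of the left and right subtrees. -/

namespace List

variable {α : Type*}

def Avoids231 [LT α] (L : List α) : Prop :=
  ∀ a b c, [a, b, c] <+ L → ¬(c < a ∧ a < b)

section Preorder

variable [Preorder α]

theorem Avoids231.sublist {L M : List α} (hM : M.Avoids231) (h : L <+ M) : L.Avoids231 :=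
  fun a b c hs => hM a b c (hs.trans h)

theorem avoids231_nil : ([] : List α).Avoids231 := by
  simp [Avoids231]

theorem avoids231_cons_iff {a : α} {t : List α} :
    (a :: t).Avoids231 ↔ t.Pairwise (fun b c => ¬(c < a ∧ a < b)) ∧ t.Avoids231 := by
  simp only [Avoids231, pairwise_iff_forall_sublist, sublist_cons_iff, cons.injEq]
  constructor
  · intro h
    exact ⟨fun hbc => h _ _ _ (.inr ⟨_, ⟨rfl, rfl⟩, hbc⟩), fun x y z hs => h x y z (.inl hs)⟩
  · rintro ⟨hpair, ht⟩ x y z (hs | ⟨_, ⟨rfl, rfl⟩, hyz⟩)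
    exacts [ht x y z hs, hpair hyz]

theorem Avoids231.append {l r : List α} (hl : l.Avoids231) (hr : r.Avoids231)
    (hlr : ∀ x ∈ l, ∀ y ∈ r, x < y) : (l ++ r).Avoids231 := by
  induction l with
  | nil => exact hr
  | cons a l ih =>
    obtain ⟨hpair, hl⟩ := avoids231_cons_iff.mp hl
    refine avoids231_cons_iff.mpr ⟨pairwise_append.mpr ⟨hpair, ?_, ?_⟩,
      ih hl fun x hx => hlr x (mem_cons_of_mem a hx)⟩
    · refine pairwise_iff_forall_sublist.mpr fun {b c} hbc ⟨hca, _⟩ => ?_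
      exact lt_asymm hca (hlr a mem_cons_self c (hbc.subset (by simp)))
    · exact fun _ _ c hc ⟨hca, _⟩ => lt_asymm hca (hlr a mem_cons_self c hc)

theorem Avoids231.cons_append {a : α} {l r : List α} (hl : l.Avoids231) (hr : r.Avoids231)
    (hla : ∀ x ∈ l, x < a) (har : ∀ y ∈ r, a < y) : (a :: (l ++ r)).Avoids231 := by
  refine avoids231_cons_iff.mpr ⟨pairwise_append.mpr ⟨?_, ?_, ?_⟩,
    hl.append hr fun x hx y hy => (hla x hx).trans (har y hy)⟩
  · exact pairwise_iff_forall_sublist.mpr fun hbc ⟨_, hab⟩ =>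
      lt_asymm hab (hla _ (hbc.subset (by simp)))
  · exact pairwise_iff_forall_sublist.mpr fun hbc ⟨hca, _⟩ =>
      lt_asymm hca (har _ (hbc.subset (by simp)))
  · exact fun b hb _ _ ⟨_, hab⟩ => lt_asymm hab (hla b hb)

end Preorder

theorem eq_filter_lt_append_filter_gt [LinearOrder α] {a : α} {t : List α} (ha : a ∉ t)
    (ht : t.Pairwise fun b c => ¬(c < a ∧ a < b)) :
    t = t.filter (· < a) ++ t.filter (a < ·) := by
  induction t with
  | nil => rfl
  | cons x t ih =>
    obtain ⟨hx, ht⟩ := pairwise_cons.mp ht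
    have hxa : x ≠ a := fun h => ha (h ▸ mem_cons_self)
    rcases hxa.lt_or_gt with hxa | hax
    · simp [hxa, hxa.not_gt, ← ih (fun h => ha (mem_cons_of_mem x h)) ht]
    · have hat : ∀ y ∈ t, a < y := fun y hy =>
        (not_lt.mp fun hya => hx y hy ⟨hya, hax⟩).lt_of_ne fun h => ha (h ▸ mem_cons_of_mem x hy)
      have hlow : t.filter (· < a) = [] :=
        filter_eq_nil_iff.mpr fun y hy => by simpa using (hat y hy).le
      have hhigh : t.filter (a < ·) = t := filter_eq_self.mpr fun y hy => by simpa using hat y hy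
      simp [hax, hax.not_gt, hlow, hhigh]

theorem triple_sublist_ofFn_iff {n : ℕ} {f : Fin n → α} {a b c : α} :
    [a, b, c] <+ ofFn f ↔ ∃ i j k : Fin n, i < j ∧ j < k ∧ f i = a ∧ f j = b ∧ f k = c := by
  constructor
  · intro h
    obtain ⟨is, his, hpw⟩ := sublist_eq_map_getElem h
    obtain ⟨i, j, k, rfl⟩ := length_eq_three.mp (by simpa using congrArg length his.symm)
    simp only [map_cons, map_nil, Fin.getElem_fin, List.getElem_ofFn, cons.injEq, and_true] at his
    simp only [pairwise_cons, mem_cons, not_mem_nil, or_false, forall_eq_or_imp, forall_eq] at hpw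
    exact ⟨_, _, _, hpw.1.1, hpw.2.1, his.1.symm, his.2.1.symm, his.2.2.symm⟩
  · rintro ⟨i, j, k, hij, hjk, rfl, rfl, rfl⟩
    simpa using map_getElem_sublist (l := ofFn f)
      (is := [i.cast length_ofFn.symm, j.cast length_ofFn.symm, k.cast length_ofFn.symm])
      (by simpa using ⟨⟨hij, hij.trans hjk⟩, hjk⟩)

theorem avoids231_ofFn_iff [LT α] {n : ℕ} (f : Fin n → α) :
    (ofFn f).Avoids231 ↔ ¬∃ i j k : Fin n, i < j ∧ j < k ∧ f k < f i ∧ f i < f j := by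
  simp only [Avoids231, triple_sublist_ofFn_iff]
  aesop

theorem range'_filter_lt {s k n : ℕ} (h : k ≤ n) :
    (range' s n).filter (· < s + k) = range' s k := by
  rw [← Nat.add_sub_cancel' h, ← range'_append_1, filter_append, filter_eq_self.mpr,
    filter_eq_nil_iff.mpr, append_nil]
  · intro x hx; simp only [mem_range'_1, decide_eq_true_eq, not_lt] at hx ⊢; omega
  · intro x hx; simp only [mem_range'_1, decide_eq_true_eq] at hx ⊢; omega

theorem range'_filter_gt {s k n : ℕ} (h : k < n) :
    (range' s n).filter (s + k < ·) = range' (s + k + 1) (n - k - 1) := by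
  conv_lhs => rw [show n = (k + 1) + (n - k - 1) by omega, ← range'_append_1, filter_append]
  rw [filter_eq_nil_iff.mpr, filter_eq_self.mpr, nil_append, add_assoc]
  · intro x hx; simp only [mem_range'_1, decide_eq_true_eq] at hx ⊢; omega
  · intro x hx; simp only [mem_range'_1, decide_eq_true_eq, not_lt] at hx ⊢; omega

theorem ofFn_val_add_one {n : ℕ} : ofFn (fun i : Fin n => (i : ℕ) + 1) = range' 1 n := by
  rw [ofFn_eq_map, range'_eq_map_range, ← map_coe_finRange_eq_range, map_map]
  simp [Function.comp_def, add_comm]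

end List

theorem Equiv.Perm.ofFn_val_add_one_perm {n : ℕ} (σ : Equiv.Perm (Fin n)) :
    (List.ofFn fun i => (σ i : ℕ) + 1).Perm (List.range' 1 n) :=
  List.ofFn_val_add_one ▸ σ.ofFn_comp_perm fun i => (i : ℕ) + 1

namespace FBT

theorem preorderAux_perm : ∀ (T : FBT) (off : ℕ),
    (T.preorderAux off).Perm (List.range' (off + 1) T.internal)
  | leaf, _ => by simp [preorderAux, internal]
  | node l r, off => by
    have hsplit : List.range' (off + 1) (l.internal + r.internal + 1) =
        List.range' (off + 1) l.internal ++
          (off + l.internal + 1) :: List.range' (off + l.internal + 1 + 1) r.internal := by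
      rw [add_assoc, ← List.range'_append_1, List.range'_succ, Nat.add_right_comm]
    rw [preorderAux, internal, hsplit]
    exact List.perm_middle.symm.trans
      ((preorderAux_perm l off).append ((preorderAux_perm r _).cons _))

theorem mem_preorderAux {T : FBT} {off x : ℕ} (hx : x ∈ T.preorderAux off) :
    off < x ∧ x ≤ off + T.internal := by
  have := List.mem_range'_1.mp ((T.preorderAux_perm off).subset hx)
  omega

theorem avoids231_preorderAux : ∀ (T : FBT) (off : ℕ), (T.preorderAux off).Avoids231
  | leaf, _ => List.avoids231_nil
  | node l r, _ =>
    .cons_append (avoids231_preorderAux l _) (avoids231_preorderAux r _)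
      (fun _ hx => by have := mem_preorderAux hx; omega)
      (fun _ hy => (mem_preorderAux hy).1)

theorem exists_preorderAux_eq : ∀ (L : List ℕ) (off m : ℕ),
    L.Perm (List.range' (off + 1) m) → L.Avoids231 →
    ∃ T : FBT, T.internal = m ∧ T.preorderAux off = L
  | [], off, m, hperm, _ => ⟨leaf, by simpa [internal, eq_comm] using hperm.length_eq, rfl⟩
  | a :: t, off, m, hperm, hav => by
    obtain ⟨s, rfl, hsm⟩ : ∃ s, a = off + 1 + s ∧ s < m := by
      have := List.mem_range'_1.mp (hperm.subset List.mem_cons_self)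
      exact ⟨a - (off + 1), by omega, by omega⟩
    obtain ⟨hpair, ht⟩ := List.avoids231_cons_iff.mp hav
    have hat : off + 1 + s ∉ t := (List.nodup_cons.mp (hperm.nodup_iff.mpr List.nodup_range')).1
    have hlow : (t.filter (· < off + 1 + s)).Perm (List.range' (off + 1) s) := by
      simpa [hsm.le, List.range'_filter_lt] using hperm.filter (· < off + 1 + s)
    have hhigh : (t.filter (off + 1 + s < ·)).Perm (List.range' (off + 1 + s + 1) (m - s - 1)) := by
      simpa [hsm, List.range'_filter_gt] using hperm.filter (off + 1 + s < ·)
    obtain ⟨Tl, hTl, hl⟩ := exists_preorderAux_eq _ off s hlow (ht.sublist List.filter_sublist)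
    obtain ⟨Tr, hTr, hr⟩ := exists_preorderAux_eq _ _ _ hhigh (ht.sublist List.filter_sublist)
    refine ⟨node Tl Tr, by simp only [internal]; omega, ?_⟩
    rw [preorderAux, hTl, hl, add_right_comm, hr, ← List.eq_filter_lt_append_filter_gt hat hpair]
  termination_by L => L.length
  decreasing_by all_goals exact Nat.lt_succ_of_le (List.length_filter_le _ _)

end FBT

/-- `σ ∈ S_n` is a tree permutation iff there are no indices
`i < j < k` with `σ(k) < σ(i) < σ(j)`. -/
theorem tree_permutation_characterization (n : ℕ) (σ : Equiv.Perm (Fin n)) :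
    IsTreePerm n σ ↔ ¬ ∃ i j k : Fin n, i < j ∧ j < k ∧ σ k < σ i ∧ σ i < σ j := by
  have hpattern : (List.ofFn fun i => (σ i : ℕ) + 1).Avoids231 ↔
      ¬ ∃ i j k : Fin n, i < j ∧ j < k ∧ σ k < σ i ∧ σ i < σ j := by
    simp only [List.avoids231_ofFn_iff, add_lt_add_iff_right, Fin.val_fin_lt]
  rw [← hpattern]
  constructor
  · rintro ⟨T, -, hT⟩
    exact hT ▸ T.avoids231_preorderAux 0
  · exact FBT.exists_preorderAux_eq _ 0 n σ.ofFn_val_add_one_perm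
end

section
/- Every tree transposition is a 1-transposition; that is, if δ_{i,j,k} is a transposition for which there exist full binary trees T1, T2 at rotation distance 1 whose tree permutations σ, τ satisfy δ_{i,j,k}(σ) = τ, then j = i+1 or k = j+1. -/
/-! In pre-order, a rotation of a parent `y` with its child `x` only moves the label of `y`
across the block formed by `x` followed by the pre-order of the outer subtree of `x`, so the
rotation itself realizes a 1-transposition, `δ_{p+1,p+2,k}` or `δ_{p+1,j,j+1}`.
On a list with distinct entries a transposition is determined by its result: positions before
`i - 1` and from `k - 1` on are fixed, while position `i - 1` receives the entry from `j - 1`.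
Tree permutations have distinct entries, so any transposition carrying the tree permutation of
`T1` to that of `T2` is that 1-transposition. -/

theorem List.Nodup.getElem?_inj {α : Type*} {l : List α} (h : l.Nodup) {m m' : ℕ}
    (hm : m < l.length) (hm' : m' < l.length) (he : l[m]? = l[m']?) : m = m' := by
  rw [List.getElem?_eq_getElem hm, List.getElem?_eq_getElem hm'] at he
  exact h.getElem_inj_iff.mp (Option.some.inj he)

section Transposition

variable {i j k : ℕ}

theorem getElem?_transposeList {l : List ℕ} (hi : 1 ≤ i) (hij : i ≤ j) (hjk : j ≤ k)
    (hk : k ≤ l.length + 1) (m : ℕ) :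
    (transposeList i j k l)[m]? =
      if m < i - 1 then l[m]?
      else if m < i - 1 + (k - j) then l[m + (j - i)]?
      else if m < k - 1 then l[m - (k - j)]?
      else l[m]? := by
  simp only [transposeList, List.getElem?_append, List.getElem?_take, List.getElem?_drop,
    List.length_append, List.length_take, List.length_drop]
  split_ifs <;> first | rfl | (exfalso; omega) | (congr 1; omega)

theorem transposeList_append_left {l r : List ℕ} (hi : 1 ≤ i) (hij : i ≤ j) (hjk : j ≤ k)
    (hk : k ≤ l.length + 1) :
    transposeList i j k (l ++ r) = transposeList i j k l ++ r := by
  have h1 : i - 1 ≤ l.length := by omega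
  have h2 : j - 1 ≤ l.length := by omega
  have h3 : k - 1 ≤ l.length := by omega
  simp only [transposeList, List.take_append_of_le_length h1, List.drop_append_of_le_length h2,
    List.drop_append_of_le_length h1, List.drop_append_of_le_length h3, List.append_assoc]
  rw [List.take_append_of_le_length (by simp; omega),
    List.take_append_of_le_length (by simp; omega)]

theorem transposeList_append_right {l r : List ℕ} (hi : 1 ≤ i) (hij : i ≤ j) (hjk : j ≤ k) :
    transposeList (i + l.length) (j + l.length) (k + l.length) (l ++ r) =
      l ++ transposeList i j k r := by
  have hd : ∀ m, 1 ≤ m → m + l.length - 1 = l.length + (m - 1) := by omega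
  have hs : ∀ m m', m + l.length - (m' + l.length) = m - m' := by omega
  simp only [transposeList, hd i hi, hd j (by omega), hd k (by omega), hs, List.take_append,
    List.drop_append, List.take_of_length_le, List.drop_of_length_le, Nat.le_add_right,
    List.take_nil]
  simp

theorem transposeList_one_two {a : ℕ} {B Q : List ℕ} :
    transposeList 1 2 (B.length + 2) (a :: (B ++ Q)) = B ++ a :: Q := by
  simp [transposeList]

theorem transposeList_one_succ {a : ℕ} {B Q : List ℕ} :
    transposeList 1 (B.length + 1) (B.length + 2) (B ++ a :: Q) = a :: (B ++ Q) := by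
  simp [transposeList]

theorem le_of_transposeList_eq {i' j' k' : ℕ} {l : List ℕ} (hl : l.Nodup)
    (hi : 1 ≤ i) (hij : i < j) (hjk : j < k) (hk : k ≤ l.length + 1)
    (hi' : 1 ≤ i') (hij' : i' < j') (hjk' : j' < k') (hk' : k' ≤ l.length + 1)
    (he : transposeList i j k l = transposeList i' j' k' l) : i' ≤ i ∧ k' ≤ k := by
  have hpos (m : ℕ) := congrArg (·[m]?) he
  simp only [getElem?_transposeList hi hij.le hjk.le hk,
    getElem?_transposeList hi' hij'.le hjk'.le hk'] at hpos
  constructor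
  · by_contra! hlt
    have h := hpos (i - 1)
    rw [if_neg (by omega), if_pos (by omega), if_pos (by omega)] at h
    have := hl.getElem?_inj (by omega) (by omega) h
    omega
  · by_contra! hlt
    have h := hpos (k' - 2)
    rw [if_neg (by omega), if_neg (by omega), if_neg (by omega), if_neg (by omega),
      if_neg (by omega), if_pos (by omega)] at h
    have := hl.getElem?_inj (by omega) (by omega) h
    omega

theorem transposeList_injective_of_nodup {i' j' k' : ℕ} {l : List ℕ} (hl : l.Nodup)
    (hi : 1 ≤ i) (hij : i < j) (hjk : j < k) (hk : k ≤ l.length + 1)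
    (hi' : 1 ≤ i') (hij' : i' < j') (hjk' : j' < k') (hk' : k' ≤ l.length + 1)
    (he : transposeList i j k l = transposeList i' j' k' l) : i = i' ∧ j = j' ∧ k = k' := by
  obtain ⟨hi'i, hk'k⟩ := le_of_transposeList_eq hl hi hij hjk hk hi' hij' hjk' hk' he
  obtain ⟨hii', hkk'⟩ := le_of_transposeList_eq hl hi' hij' hjk' hk' hi hij hjk hk he.symm
  obtain rfl : i = i' := le_antisymm hii' hi'i
  refine ⟨rfl, ?_, le_antisymm hkk' hk'k⟩
  have h := congrArg (·[i - 1]?) he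
  simp only [getElem?_transposeList hi hij.le hjk.le hk,
    getElem?_transposeList hi hij'.le hjk'.le hk', lt_irrefl, if_false] at h
  rw [if_pos (by omega), if_pos (by omega)] at h
  have := hl.getElem?_inj (by omega) (by omega) h
  omega

end Transposition

namespace FBT

theorem nodup_preorderAux (T : FBT) (off : ℕ) : (T.preorderAux off).Nodup := by
  induction T generalizing off with
  | leaf => simp [preorderAux]
  | node l r ihl ihr =>
    refine List.nodup_cons.2 ⟨fun h => ?_, (ihl off).append (ihr _) fun x hl hr => ?_⟩
    · rcases List.mem_append.1 h with h | h
      · have := mem_preorderAux h; omega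
      · have := mem_preorderAux h; omega
    · have := mem_preorderAux hl
      have := mem_preorderAux hr
      omega

theorem length_preorderAux (T : FBT) (off : ℕ) : (T.preorderAux off).length = T.internal := by
  induction T generalizing off with
  | leaf => rfl
  | node l r ihl ihr => simp [preorderAux, internal, ihl, ihr]

end FBT

theorem Rot.internal_eq_s3 {T1 T2 : FBT} (h : Rot T1 T2) : T1.internal = T2.internal := by
  induction h with
  | rotR | rotL => simp only [FBT.internal]; omega
  | congrL r _ ih | congrR l _ ih => simp only [FBT.internal, ih]

theorem Rot.exists_transposeList_eq {T1 T2 : FBT} (h : Rot T1 T2) (off : ℕ) :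
    ∃ i j k, 1 ≤ i ∧ i < j ∧ j < k ∧ k ≤ (T1.preorderAux off).length + 1 ∧
      (j = i + 1 ∨ k = j + 1) ∧
      transposeList i j k (T1.preorderAux off) = T2.preorderAux off := by
  induction h generalizing off with
  | rotR C D E =>
    refine ⟨1, 2, C.internal + 3, le_rfl, one_lt_two, by omega, ?_, Or.inl rfl, ?_⟩
    · simp [FBT.preorderAux, FBT.length_preorderAux]
    · have e : off + C.internal + 1 + D.internal + 1 =
          off + (C.internal + D.internal + 1) + 1 := by omega
      simpa [FBT.preorderAux, FBT.internal, e, FBT.length_preorderAux] using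
        transposeList_one_two (B := (off + C.internal + 1) :: C.preorderAux off)
  | rotL C D E =>
    refine ⟨1, C.internal + 2, C.internal + 3, le_rfl, by omega, by omega, ?_, Or.inr rfl, ?_⟩
    · simp [FBT.preorderAux, FBT.length_preorderAux]
    · have e : off + C.internal + 1 + D.internal + 1 =
          off + (C.internal + D.internal + 1) + 1 := by omega
      simpa [FBT.preorderAux, FBT.internal, e, FBT.length_preorderAux] using
        transposeList_one_succ (B := (off + C.internal + 1) :: C.preorderAux off)
  | @congrL l l' r hrot ih =>
    obtain ⟨i, j, k, hi, hij, hjk, hk, hone, he⟩ := ih off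
    refine ⟨i + 1, j + 1, k + 1, by omega, by omega, by omega, ?_, by omega, ?_⟩
    · simp only [FBT.preorderAux, List.length_cons, List.length_append]
      omega
    · have := transposeList_append_right (l := [off + l.internal + 1])
        (r := l.preorderAux off ++ r.preorderAux (off + l.internal + 1)) hi hij.le hjk.le
      simp only [List.length_singleton, List.singleton_append] at this
      rw [FBT.preorderAux, this, transposeList_append_left hi hij.le hjk.le hk, he,
        FBT.preorderAux, hrot.internal_eq_s3]
  | @congrR r r' l hrot ih =>
    obtain ⟨i, j, k, hi, hij, hjk, hk, hone, he⟩ := ih (off + l.internal + 1)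
    have hL : ((off + l.internal + 1) :: l.preorderAux off).length = l.internal + 1 := by
      simp [FBT.length_preorderAux]
    refine ⟨i + (l.internal + 1), j + (l.internal + 1), k + (l.internal + 1),
      by omega, by omega, by omega, ?_, by omega, ?_⟩
    · simp only [FBT.preorderAux, List.length_cons, List.length_append, FBT.length_preorderAux]
        at hk ⊢
      omega
    · have := transposeList_append_right (l := (off + l.internal + 1) :: l.preorderAux off)
        (r := r.preorderAux (off + l.internal + 1)) hi hij.le hjk.le
      rw [hL] at this
      simp only [FBT.preorderAux, ← List.cons_append, this, he]

theorem rot_of_rotDist_eq_one {T1 T2 : FBT} (h : rotDist T1 T2 = 1) : Rot T1 T2 := by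
  have hne : {k | RotChain k T1 T2}.Nonempty := by
    by_contra hc
    rw [Set.not_nonempty_iff_eq_empty] at hc
    rw [rotDist, hc, Nat.sInf_empty] at h
    exact zero_ne_one h
  have hmem := Nat.sInf_mem hne
  rw [← rotDist, h] at hmem
  obtain ⟨T, hT, -, rfl⟩ := hmem
  exact hT

theorem tree_transposition_is_one_transposition_general (n i j k : ℕ)
    (hi : 1 ≤ i) (hij : i < j) (hjk : j < k) (hk : k ≤ n + 1)
    (T1 T2 : FBT) (h1 : T1.internal = n)
    (hd : rotDist T1 T2 = 1)
    (ht : transposeList i j k (T1.preorderAux 0) = T2.preorderAux 0) :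
    j = i + 1 ∨ k = j + 1 := by
  obtain ⟨i', j', k', hi', hij', hjk', hk', hone, hrot⟩ :=
    (rot_of_rotDist_eq_one hd).exists_transposeList_eq 0
  have hlen : (T1.preorderAux 0).length = n := by rw [FBT.length_preorderAux, h1]
  obtain ⟨rfl, rfl, rfl⟩ := transposeList_injective_of_nodup (T1.nodup_preorderAux 0)
    hi hij hjk (hlen ▸ hk) hi' hij' hjk' hk' (ht.trans hrot.symm)
  exact hone

/-- every tree transposition is a 1-transposition: if `δ_{i,j,k}` maps the
tree permutation of `T1` to that of `T2` for some full binary trees at rotation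
distance 1, then `j = i+1` or `k = j+1`. -/
theorem tree_transposition_is_one_transposition (n i j k : ℕ)
    (hi : 1 ≤ i) (hij : i < j) (hjk : j < k) (hk : k ≤ n + 1)
    (T1 T2 : FBT) (h1 : T1.internal = n) (h2 : T2.internal = n)
    (hd : rotDist T1 T2 = 1)
    (ht : transposeList i j k (T1.preorderAux 0) = T2.preorderAux 0) :
    j = i + 1 ∨ k = j + 1 :=
  tree_transposition_is_one_transposition_general n i j k hi hij hjk hk T1 T2 h1 hd ht
end

section
/- The number of distinct tree transpositions on permutations of n elements is (n−1)². -/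
/-! A rotation changes the tree permutation by swapping two adjacent blocks, one of which is a
single entry, and every such swap is realised by a rotation at the bottom of a left spine.
Since a tree permutation has no repeated entries, the swap determines the indices, so the
tree transpositions are exactly the `δ_{i,j,k}` with `j = i + 1` or `k = j + 1`: the moves of
a single entry to another position. There are `n (n - 1)` such moves, and each of the `n - 1`
swaps of neighbours is counted twice. -/

namespace FBT

theorem preorderAux_perm_range' (T : FBT) (off : ℕ) :
    (T.preorderAux off).Perm (List.range' (off + 1) T.internal) := by
  induction T generalizing off with
  | leaf => simp [preorderAux, internal]
  | node l r ihl ihr =>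
    have hsplit : List.range' (off + 1) (node l r).internal =
        List.range' (off + 1) l.internal ++
          (off + l.internal + 1) :: List.range' (off + l.internal + 2) r.internal := by
      rw [internal, show l.internal + r.internal + 1 = l.internal + (r.internal + 1) by omega,
        ← List.range'_append_1, List.range'_succ]
      simp only [Nat.add_right_comm off 1, Nat.add_assoc]
    rw [hsplit, preorderAux]
    exact ((ihl off).append (ihr _)).cons _ |>.trans List.perm_middle.symm

theorem exists_preorderAux_rotate (C D E : FBT) (off : ℕ) :
    ∃ (r : ℕ) (Y Q : List ℕ), Y.length = C.internal + 1 ∧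
      (node (node C D) E).preorderAux off = [r] ++ Y ++ Q ∧
      (node C (node D E)).preorderAux off = Y ++ [r] ++ Q := by
  refine ⟨off + C.internal + D.internal + 2, (off + C.internal + 1) :: C.preorderAux off,
    D.preorderAux (off + C.internal + 1) ++ E.preorderAux (off + C.internal + D.internal + 2),
    by simp [length_preorderAux], ?_, ?_⟩
  · simp [preorderAux, internal, Nat.add_assoc]
  · simp [preorderAux, Nat.add_right_comm _ 1, Nat.add_assoc]

theorem internal_attachLeftmost (S T : FBT) :
    (attachLeftmost S T).internal = S.internal + T.internal := by
  induction S with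
  | leaf => simp [attachLeftmost, internal]
  | node l r ih => simp only [attachLeftmost, internal, ih]; omega

theorem internal_leftComb (m : ℕ) : (leftComb m).internal = m := by
  induction m with
  | zero => rfl
  | succ m ih => simp [leftComb, internal, ih]

theorem internal_rightComb (m : ℕ) : (rightComb m).internal = m := by
  induction m with
  | zero => rfl
  | succ m ih => simp [rightComb, internal, ih]

theorem preorderAux_attachLeftmost_leftComb (m : ℕ) (T : FBT) (off : ℕ) :
    (attachLeftmost (leftComb m) T).preorderAux off =
      (List.range' (off + T.internal + 1) m).reverse ++ T.preorderAux off := by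
  induction m with
  | zero => simp [leftComb, attachLeftmost]
  | succ m ih =>
    simp only [leftComb, attachLeftmost, preorderAux, ih, internal_attachLeftmost,
      internal_leftComb, List.range'_1_concat, List.reverse_append, List.reverse_singleton,
      List.singleton_append, List.append_nil]
    congr 1
    omega

end FBT

open FBT

namespace Rot

theorem internal_eq_s4 {T₁ T₂ : FBT} (h : Rot T₁ T₂) : T₁.internal = T₂.internal := by
  induction h <;> simp only [internal] <;> omega

theorem ne {T₁ T₂ : FBT} (h : Rot T₁ T₂) : T₁ ≠ T₂ := by
  induction h with
  | rotR C D E | rotL C D E =>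
    intro h
    simp only [node.injEq] at h
    have := congrArg internal h.1
    simp only [internal] at this
    omega
  | congrL r _ ih => simpa using ih
  | congrR l _ ih => simpa using ih

theorem attachLeftmost (S : FBT) {T T' : FBT} (h : Rot T T') :
    Rot (attachLeftmost S T) (attachLeftmost S T') := by
  induction S with
  | leaf => exact h
  | node l r ih => exact congrL r ih

theorem exists_preorderAux_blocks {T₁ T₂ : FBT} (h : Rot T₁ T₂) (off : ℕ) :
    ∃ P X Y Q : List ℕ, X ≠ [] ∧ Y ≠ [] ∧ (X.length = 1 ∨ Y.length = 1) ∧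
      T₁.preorderAux off = P ++ X ++ Y ++ Q ∧ T₂.preorderAux off = P ++ Y ++ X ++ Q := by
  induction h generalizing off with
  | rotR C D E =>
    obtain ⟨r, Y, Q, hY, h₁, h₂⟩ := exists_preorderAux_rotate C D E off
    exact ⟨[], [r], Y, Q, by simp, by simp [← List.length_pos_iff, hY], Or.inl rfl, h₁,
      h₂⟩
  | rotL C D E =>
    obtain ⟨r, Y, Q, hY, h₁, h₂⟩ := exists_preorderAux_rotate C D E off
    exact ⟨[], Y, [r], Q, by simp [← List.length_pos_iff, hY], by simp, Or.inr rfl, h₂,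
      h₁⟩
  | @congrL l l' r h ih =>
    obtain ⟨P, X, Y, Q, hX, hY, hXY, h₁, h₂⟩ := ih off
    refine ⟨(off + l.internal + 1) :: P, X, Y, Q ++ r.preorderAux (off + l.internal + 1),
      hX, hY, hXY, ?_, ?_⟩
    · simp [preorderAux, h₁]
    · simp [preorderAux, h₂, h.internal_eq_s4]
  | @congrR r r' l h ih =>
    obtain ⟨P, X, Y, Q, hX, hY, hXY, h₁, h₂⟩ := ih (off + l.internal + 1)
    exact ⟨(off + l.internal + 1) :: l.preorderAux off ++ P, X, Y, Q, hX, hY, hXY,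
      by simp [preorderAux, h₁], by simp [preorderAux, h₂]⟩

end Rot

theorem rotChain_one_iff {T₁ T₂ : FBT} : RotChain 1 T₁ T₂ ↔ Rot T₁ T₂ := by
  simp [RotChain, RotChainP]

theorem rotDist_eq_one_iff {T₁ T₂ : FBT} : rotDist T₁ T₂ = 1 ↔ Rot T₁ T₂ := by
  refine ⟨fun h => rotChain_one_iff.1 ?_, fun h => ?_⟩
  · exact h ▸ Nat.sInf_mem (Nat.nonempty_of_sInf_eq_succ h)
  · refine le_antisymm (Nat.sInf_le (rotChain_one_iff.2 h)) (Nat.one_le_iff_ne_zero.2 fun h0 => ?_)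
    rcases Nat.sInf_eq_zero.1 h0 with h0 | h0
    · exact h.ne h0
    · exact (Set.eq_empty_iff_forall_notMem.1 h0) 1 (rotChain_one_iff.2 h)

/-- The rotation is performed at the bottom of a left spine of length `p`, on a right comb of
size `x + y - 2` and a right comb of size `q`. -/
theorem exists_rot_preorderAux_blocks (p q : ℕ) {x y : ℕ} (hx : 0 < x) (hy : 0 < y)
    (hxy : x = 1 ∨ y = 1) :
    ∃ T₁ T₂ : FBT, Rot T₁ T₂ ∧ T₁.internal = p + x + y + q ∧
      ∃ P X Y Q : List ℕ, P.length = p ∧ X.length = x ∧ Y.length = y ∧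
        T₁.preorderAux 0 = P ++ X ++ Y ++ Q ∧ T₂.preorderAux 0 = P ++ Y ++ X ++ Q := by
  set C := rightComb (x + y - 2)
  set E := rightComb q
  have hrot : Rot (node (node C leaf) E) (node C (node leaf E)) := .rotR C leaf E
  set P := (List.range' (0 + (node (node C leaf) E).internal + 1) p).reverse
  obtain ⟨r, Y, Q, hY, h₁, h₂⟩ := exists_preorderAux_rotate C leaf E 0
  have hY' : Y.length = x + y - 1 := by rw [hY, internal_rightComb]; omega
  have hint : (attachLeftmost (leftComb p) (node (node C leaf) E)).internal = p + x + y + q := by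
    simp only [internal_attachLeftmost, internal_leftComb, internal_rightComb, internal, C, E]
    omega
  have e₁ : (attachLeftmost (leftComb p) (node (node C leaf) E)).preorderAux 0 =
      P ++ [r] ++ Y ++ Q := by
    rw [preorderAux_attachLeftmost_leftComb, h₁]
    simp only [List.append_assoc, P]
  have e₂ : (attachLeftmost (leftComb p) (node C (node leaf E))).preorderAux 0 =
      P ++ Y ++ [r] ++ Q := by
    rw [preorderAux_attachLeftmost_leftComb, h₂, ← hrot.internal_eq_s4]
    simp only [List.append_assoc, P]
  rcases hxy with rfl | rfl
  · exact ⟨_, _, hrot.attachLeftmost _, hint, P, [r], Y, Q, by simp [P], rfl, by omega, e₁,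
      e₂⟩
  · exact ⟨_, _, (Rot.rotL C leaf E).attachLeftmost _,
      ((hrot.attachLeftmost _).internal_eq_s4).symm.trans hint, P, Y, [r], Q, by simp [P], by omega,
      rfl, e₂, e₁⟩

section transposeList

variable {σ : List ℕ} {a b c a' b' c' p : ℕ}

theorem transposeList_succ (a b c : ℕ) (σ : List ℕ) :
    transposeList (a + 1) (b + 1) (c + 1) σ =
      σ.take a ++ (σ.drop b).take (c - b) ++ (σ.drop a).take (b - a) ++ σ.drop c := by
  simp [transposeList]

theorem transposeList_append (P X Y Q : List ℕ) :
    transposeList (P.length + 1) (P.length + X.length + 1) (P.length + X.length + Y.length + 1)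
      (P ++ X ++ Y ++ Q) = P ++ Y ++ X ++ Q := by
  rw [transposeList_succ]
  simp [List.drop_append, List.drop_eq_nil_of_le, Nat.add_assoc, Nat.add_sub_add_left]

theorem getElem?_transposeList_of_lt (hp : p < a) (ha : a ≤ σ.length) :
    (transposeList (a + 1) (b + 1) (c + 1) σ)[p]? = σ[p]? := by
  simp only [transposeList_succ, List.getElem?_append, List.length_append, List.length_take,
    List.length_drop, List.getElem?_take, List.getElem?_drop]
  grind

theorem getElem?_transposeList_self (hab : a < b) (hbc : b < c) (hb : b < σ.length) :
    (transposeList (a + 1) (b + 1) (c + 1) σ)[a]? = σ[b]? := by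
  simp only [transposeList_succ, List.getElem?_append, List.length_append, List.length_take,
    List.length_drop, List.getElem?_take, List.getElem?_drop]
  grind

theorem getElem?_transposeList_sub_one (hab : a < b) (hbc : b < c) (hc : c ≤ σ.length) :
    (transposeList (a + 1) (b + 1) (c + 1) σ)[c - 1]? = σ[b - 1]? := by
  simp only [transposeList_succ, List.getElem?_append, List.length_append, List.length_take,
    List.length_drop, List.getElem?_take, List.getElem?_drop]
  grind

theorem getElem?_transposeList_of_le (hab : a ≤ b) (hbc : b ≤ c) (hp : c ≤ p) :
    (transposeList (a + 1) (b + 1) (c + 1) σ)[p]? = σ[p]? := by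
  simp only [transposeList_succ, List.getElem?_append, List.length_append, List.length_take,
    List.length_drop, List.getElem?_take, List.getElem?_drop]
  grind

/-- `a` is the first and `c - 1` the last position where `δ_{a+1,b+1,c+1}` moves an entry. -/
theorem le_of_transposeList_eq_s4 (hσ : σ.Nodup)
    (hab : a < b) (hbc : b < c) (hc : c ≤ σ.length)
    (hab' : a' < b') (hbc' : b' < c') (hc' : c' ≤ σ.length)
    (h : transposeList (a + 1) (b + 1) (c + 1) σ = transposeList (a' + 1) (b' + 1) (c' + 1) σ) :
    a ≤ a' ∧ c ≤ c' := by
  constructor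
  · by_contra! ha
    have : σ[a']? = σ[b']? := by
      rw [← getElem?_transposeList_of_lt ha (by omega), h,
        getElem?_transposeList_self hab' hbc' (by omega)]
    have := (List.getElem?_inj (by omega) hσ).1 this
    omega
  · by_contra! hc''
    have : σ[b - 1]? = σ[c - 1]? := by
      rw [← getElem?_transposeList_sub_one hab hbc hc, h,
        getElem?_transposeList_of_le hab'.le hbc'.le (by omega)]
    have := (List.getElem?_inj (by omega) hσ).1 this
    omega

theorem eq_of_transposeList_eq (hσ : σ.Nodup)
    (hab : a < b) (hbc : b < c) (hc : c ≤ σ.length)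
    (hab' : a' < b') (hbc' : b' < c') (hc' : c' ≤ σ.length)
    (h : transposeList (a + 1) (b + 1) (c + 1) σ = transposeList (a' + 1) (b' + 1) (c' + 1) σ) :
    a = a' ∧ b = b' ∧ c = c' := by
  obtain ⟨ha, hc₁⟩ := le_of_transposeList_eq_s4 hσ hab hbc hc hab' hbc' hc' h
  obtain ⟨ha', hc₂⟩ := le_of_transposeList_eq_s4 hσ hab' hbc' hc' hab hbc hc h.symm
  obtain rfl : a = a' := le_antisymm ha ha'
  have : σ[b]? = σ[b']? := by
    rw [← getElem?_transposeList_self hab hbc (by omega), h,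
      getElem?_transposeList_self hab' hbc' (by omega)]
  exact ⟨rfl, (List.getElem?_inj (by omega) hσ).1 this, le_antisymm hc₁ hc₂⟩

end transposeList

theorem isTreeTransposition_iff {n i j k : ℕ} (hi : 1 ≤ i) (hij : i < j) (hjk : j < k)
    (hk : k ≤ n + 1) : IsTreeTransposition n i j k ↔ j = i + 1 ∨ k = j + 1 := by
  constructor
  · rintro ⟨T₁, T₂, hT₁, -, hd, htr⟩
    obtain ⟨P, X, Y, Q, hX, hY, hXY, h₁, h₂⟩ :=
      (rotDist_eq_one_iff.1 hd).exists_preorderAux_blocks 0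
    have hlen := T₁.length_preorderAux 0
    rw [h₁, hT₁] at hlen
    simp only [List.length_append] at hlen
    have hX' := List.length_pos_iff.2 hX
    have hY' := List.length_pos_iff.2 hY
    rw [h₂, ← transposeList_append P X Y Q, ← h₁,
      show i = i - 1 + 1 by omega, show j = j - 1 + 1 by omega, show k = k - 1 + 1 by omega] at htr
    have := eq_of_transposeList_eq (T₁.nodup_preorderAux 0) (by omega) (by omega)
      (by rw [T₁.length_preorderAux, hT₁]; omega) (by omega) (by omega)
      (by rw [T₁.length_preorderAux, hT₁]; omega) htr
    omega
  · intro h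
    obtain ⟨T₁, T₂, hrot, hT₁, P, X, Y, Q, hP, hX, hY, h₁, h₂⟩ :=
      exists_rot_preorderAux_blocks (i - 1) (n + 1 - k) (x := j - i) (y := k - j)
        (by omega) (by omega) (by omega)
    refine ⟨T₁, T₂, by omega, by rw [← hrot.internal_eq_s4]; omega, rotDist_eq_one_iff.2 hrot,
      ?_⟩
    rw [h₁, h₂, ← transposeList_append P X Y Q, hP, hX, hY]
    congr 1 <;> omega

/-- Encodes a tree transposition by the move it performs on the permutation: for `a ≤ b` the
entry at position `a` moves right to position `b + 1`, for `b < a` the entry at position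
`a + 1` moves left to position `b`. -/
def moveTriple : ℕ × ℕ → ℕ × ℕ × ℕ
  | (a, b) => if a ≤ b then (a, a + 1, b + 2) else (b, a + 1, a + 2)

theorem moveTriple_injective : Function.Injective moveTriple := by
  rintro ⟨a, b⟩ ⟨a', b'⟩ h
  simp only [moveTriple] at h
  split_ifs at h <;> simp only [Prod.mk.injEq] at h ⊢ <;> omega

theorem mem_image_moveTriple_iff {n i j k : ℕ} :
    (i, j, k) ∈ (Finset.Icc 1 (n - 1) ×ˢ Finset.Icc 1 (n - 1)).image moveTriple ↔
      1 ≤ i ∧ i < j ∧ j < k ∧ k ≤ n + 1 ∧ (j = i + 1 ∨ k = j + 1) := by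
  simp only [Finset.mem_image, Finset.mem_product, Finset.mem_Icc, Prod.exists, moveTriple]
  constructor
  · rintro ⟨a, b, hab, h⟩
    split_ifs at h <;> simp only [Prod.mk.injEq] at h <;> omega
  · rintro ⟨hi, hij, hjk, hk, h⟩
    by_cases hj : j = i + 1
    · refine ⟨i, k - 2, by omega, ?_⟩
      split_ifs <;> simp only [Prod.mk.injEq, true_and] <;> omega
    · refine ⟨j - 1, i, by omega, ?_⟩
      split_ifs <;> simp only [Prod.mk.injEq, true_and] <;> omega

/-- the number of distinct tree transpositions on `n` elements is
`(n-1)²`. -/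
theorem count_tree_transpositions (n : ℕ) :
    Nat.card {t : ℕ × ℕ × ℕ // 1 ≤ t.1 ∧ t.1 < t.2.1 ∧ t.2.1 < t.2.2 ∧ t.2.2 ≤ n + 1 ∧
      IsTreeTransposition n t.1 t.2.1 t.2.2} = (n - 1) ^ 2 := by
  have hmem (t : ℕ × ℕ × ℕ) : (1 ≤ t.1 ∧ t.1 < t.2.1 ∧ t.2.1 < t.2.2 ∧ t.2.2 ≤ n + 1 ∧
      IsTreeTransposition n t.1 t.2.1 t.2.2) ↔
        t ∈ (Finset.Icc 1 (n - 1) ×ˢ Finset.Icc 1 (n - 1)).image moveTriple := by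
    obtain ⟨i, j, k⟩ := t
    rw [mem_image_moveTriple_iff]
    constructor <;> rintro ⟨hi, hij, hjk, hk, h⟩ <;>
      exact ⟨hi, hij, hjk, hk, by simpa only [isTreeTransposition_iff hi hij hjk hk] using h⟩
  rw [Nat.card_congr (Equiv.subtypeEquivRight hmem), Nat.card_eq_finsetCard,
    Finset.card_image_of_injective _ moveTriple_injective, Finset.card_product, Nat.card_Icc,
    Nat.add_sub_cancel, sq]
end

section
/- For any full binary tree T with n internal nodes and height h, the minimum rotation distance from T to a full skew tree with n internal nodes is exactly n − h; that is, some skew tree is at rotation distance n − h from T, and every skew tree is at rotation distance at least n − h from T. -/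
/-!
A rotation preserves the number of internal nodes and raises the height by at most one, while a
skew tree with `n` internal nodes has height `n`; so at least `n - h` rotations are needed.
Conversely, make the taller subtree of the root skew recursively, then fold the other subtree into
the resulting spine, one rotation per internal node: a rotation at the root moves one internal
node of that subtree onto the spine. This uses `n - h` rotations in total.
-/

namespace FBT

theorem height_le_internal (T : FBT) : T.height ≤ T.internal := by
  induction T with
  | leaf => rfl
  | node l r ihl ihr => simp only [height, internal]; omega

theorem skew.height_eq {S : FBT} (hS : S.skew) : S.height = S.internal := by
  induction S with
  | leaf => rfl
  | node l r ihl ihr =>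
    obtain ⟨hleaf | hleaf, hl, hr⟩ := hS <;> subst hleaf
    · simp [height, internal, ihr hr]
    · simp [height, internal, ihl hl]

end FBT

namespace Rot

theorem height_le {T T' : FBT} (h : Rot T T') : T'.height ≤ T.height + 1 := by
  induction h <;> simp only [FBT.height, *] <;> omega

end Rot

namespace RotChain

theorem cons {k : ℕ} {T U V : FBT} (h : Rot T U) (hc : RotChain k U V) :
    RotChain (k + 1) T V :=
  ⟨U, h, trivial, hc⟩

theorem trans_s10 {a b : ℕ} {T U V : FBT} (h₁ : RotChain a T U) (h₂ : RotChain b U V) :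
    RotChain (a + b) T V := by
  induction a generalizing T with
  | zero => cases h₁; rwa [Nat.zero_add]
  | succ a ih =>
    obtain ⟨W, hW, -, hc⟩ := h₁
    rw [Nat.add_right_comm]
    exact cons hW (ih hc)

theorem node_left {k : ℕ} {l l' : FBT} (r : FBT) (h : RotChain k l l') :
    RotChain k (FBT.node l r) (FBT.node l' r) := by
  induction k generalizing l with
  | zero => cases h; rfl
  | succ k ih =>
    obtain ⟨W, hW, -, hc⟩ := h
    exact cons (Rot.congrL r hW) (ih hc)

theorem node_right {k : ℕ} {r r' : FBT} (l : FBT) (h : RotChain k r r') :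
    RotChain k (FBT.node l r) (FBT.node l r') := by
  induction k generalizing r with
  | zero => cases h; rfl
  | succ k ih =>
    obtain ⟨W, hW, -, hc⟩ := h
    exact cons (Rot.congrR l hW) (ih hc)

theorem internal_eq {k : ℕ} {T T' : FBT} (h : RotChain k T T') : T'.internal = T.internal := by
  induction k generalizing T with
  | zero => cases h; rfl
  | succ k ih =>
    obtain ⟨W, hW, -, hc⟩ := h
    rw [ih hc, hW.internal_eq]

theorem height_le {k : ℕ} {T T' : FBT} (h : RotChain k T T') : T'.height ≤ T.height + k := by
  induction k generalizing T with
  | zero => cases h; rfl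
  | succ k ih =>
    obtain ⟨W, hW, -, hc⟩ := h
    have := hW.height_le
    have := ih hc
    omega

theorem exists_skew_of_node_left (l : FBT) {S : FBT} (hS : S.skew) :
    ∃ S', S'.skew ∧ RotChain l.internal (FBT.node l S) S' := by
  induction l generalizing S with
  | leaf => exact ⟨FBT.node FBT.leaf S, ⟨Or.inl rfl, trivial, hS⟩, rfl⟩
  | node A B ihA ihB =>
    obtain ⟨S₁, hS₁, hc₁⟩ := ihB hS
    obtain ⟨S₂, hS₂, hc₂⟩ := ihA hS₁
    refine ⟨S₂, hS₂, ?_⟩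
    rw [FBT.internal, Nat.add_comm A.internal]
    exact cons (Rot.rotR A B S) ((hc₁.node_right A).trans_s10 hc₂)

theorem exists_skew_of_node_right (r : FBT) {S : FBT} (hS : S.skew) :
    ∃ S', S'.skew ∧ RotChain r.internal (FBT.node S r) S' := by
  induction r generalizing S with
  | leaf => exact ⟨FBT.node S FBT.leaf, ⟨Or.inr rfl, hS, trivial⟩, rfl⟩
  | node D E ihD ihE =>
    obtain ⟨S₁, hS₁, hc₁⟩ := ihD hS
    obtain ⟨S₂, hS₂, hc₂⟩ := ihE hS₁
    refine ⟨S₂, hS₂, ?_⟩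
    rw [FBT.internal]
    exact cons (Rot.rotL S D E) ((hc₁.node_left E).trans_s10 hc₂)

theorem exists_skew (T : FBT) : ∃ S, S.skew ∧ RotChain (T.internal - T.height) T S := by
  induction T with
  | leaf => exact ⟨FBT.leaf, trivial, rfl⟩
  | node l r ihl ihr =>
    have hl := l.height_le_internal
    have hr := r.height_le_internal
    by_cases hlr : l.height ≤ r.height
    · obtain ⟨Sr, hSr, hcr⟩ := ihr
      obtain ⟨S, hS, hc⟩ := exists_skew_of_node_left l hSr
      refine ⟨S, hS, ?_⟩
      have hcount : (FBT.node l r).internal - (FBT.node l r).height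
          = (r.internal - r.height) + l.internal := by
        simp only [FBT.internal, FBT.height]; omega
      rw [hcount]
      exact (hcr.node_right l).trans_s10 hc
    · obtain ⟨Sl, hSl, hcl⟩ := ihl
      obtain ⟨S, hS, hc⟩ := exists_skew_of_node_right r hSl
      refine ⟨S, hS, ?_⟩
      have hcount : (FBT.node l r).internal - (FBT.node l r).height
          = (l.internal - l.height) + r.internal := by
        simp only [FBT.internal, FBT.height]; omega
      rw [hcount]
      exact (hcl.node_left r).trans_s10 hc

end RotChain

/-- for a full binary tree `T` with `n` internal nodes and height `h`,
the distance to the nearest full skew tree is exactly `n - h`: some skew tree is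
reachable in `n - h` rotations, and no skew tree is reachable in fewer. -/
theorem distance_to_nearest_skew_tree (n h : ℕ) (T : FBT)
    (hn : T.internal = n) (hh : T.height = h) :
    (∃ S : FBT, S.internal = n ∧ S.skew ∧ RotChain (n - h) T S) ∧
    (∀ (S : FBT) (k : ℕ), S.internal = n → S.skew → RotChain k T S → n - h ≤ k) := by
  subst hn hh
  refine ⟨?_, fun S k _ hS hc => ?_⟩
  · obtain ⟨S, hS, hc⟩ := RotChain.exists_skew T
    exact ⟨S, hc.internal_eq, hS, hc⟩
  · have hheight := hc.height_le
    rw [hS.height_eq, hc.internal_eq] at hheight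
    omega
end
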